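/- arXiv:2110.02665 — 2 statements merged into one kernel-verified Lean document; each statement's English description precedes it below -/
import Mathlib

section
/- The bilinear form (φ, ψ) ↦ [φ, Jψ] on continuous functions [-τ_K, τ_K] → ℂ^{2n} is anti-symmetric under the Hamiltonian structure assumptions: [φ, Jψ] = -[ψ, Jφ], where [φ, ψ] := ψ(0)ᵀφ(0) + Σₖ(∫₀^{τₖ}ψ(θ)ᵀH₋ₖφ(θ-τₖ)dθ - ∫₀^{τₖ}ψ(θ-τₖ)ᵀHₖφ(θ)dθ). -/
open Matrix Set intervalIntegral

noncomputable def Jre (n : ℕ) : Matrix (Fin n ⊕ Fin n) (Fin n ⊕ Fin n) ℝ :=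
  Matrix.fromBlocks 0 1 (-1) 0

noncomputable def JC (n : ℕ) : Matrix (Fin n ⊕ Fin n) (Fin n ⊕ Fin n) ℂ :=
  (Jre n).map ((↑) : ℝ → ℂ)

/-- The bilinear form [φ, ψ] = ψ(0)ᵀφ(0)
    + Σₖ (∫₀^{τₖ} ψ(θ)ᵀ H₋ₖ φ(θ-τₖ) dθ - ∫₀^{τₖ} ψ(θ-τₖ)ᵀ Hₖ φ(θ) dθ). -/
noncomputable def bil {n K : ℕ}
    (Hp Hm : Fin (K + 1) → Matrix (Fin n ⊕ Fin n) (Fin n ⊕ Fin n) ℝ)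
    (τ : Fin (K + 1) → ℝ)
    (φ ψ : ℝ → ((Fin n ⊕ Fin n) → ℂ)) : ℂ :=
  ψ 0 ⬝ᵥ φ 0 +
    ∑ k, ((∫ θ in (0:ℝ)..(τ k), ψ θ ⬝ᵥ ((Hm k).map ((↑) : ℝ → ℂ) *ᵥ φ (θ - τ k)))
        - ∫ θ in (0:ℝ)..(τ k), ψ (θ - τ k) ⬝ᵥ ((Hp k).map ((↑) : ℝ → ℂ) *ᵥ φ θ))

lemma dotA {m : Type*} [Fintype m] (A : Matrix m m ℂ) (x y : m → ℂ) :
    (A *ᵥ x) ⬝ᵥ y = x ⬝ᵥ (Aᵀ *ᵥ y) := by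
  rw [dotProduct_mulVec, vecMul_transpose, dotProduct_comm]

lemma JC_transpose (n : ℕ) : (JC n)ᵀ = -(JC n) := by
  ext i j
  cases i <;> cases j <;>
    simp [JC, Jre, Matrix.fromBlocks, Matrix.transpose_apply, Matrix.map_apply, Matrix.one_apply, eq_comm]

lemma keyJ {n : ℕ} (a b : (Fin n ⊕ Fin n) → ℂ) :
    (JC n *ᵥ a) ⬝ᵥ b = -((JC n *ᵥ b) ⬝ᵥ a) := by
  rw [dotA, JC_transpose, Matrix.neg_mulVec, dotProduct_neg, dotProduct_comm]

lemma key {n : ℕ} (M N : Matrix (Fin n ⊕ Fin n) (Fin n ⊕ Fin n) ℝ)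
    (h : (Jre n * M)ᵀ = Jre n * N) (a b : (Fin n ⊕ Fin n) → ℂ) :
    (JC n *ᵥ a) ⬝ᵥ ((M.map ((↑) : ℝ → ℂ)) *ᵥ b)
      = (JC n *ᵥ b) ⬝ᵥ ((N.map ((↑) : ℝ → ℂ)) *ᵥ a) := by
  have eM : JC n * M.map ((↑) : ℝ → ℂ) = (Jre n * M).map ((↑) : ℝ → ℂ) :=
    (Matrix.map_mul (f := Complex.ofRealHom)).symm
  have eN : JC n * N.map ((↑) : ℝ → ℂ) = (Jre n * N).map ((↑) : ℝ → ℂ) :=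
    (Matrix.map_mul (f := Complex.ofRealHom)).symm
  have hC : ((JC n) * (M.map ((↑) : ℝ → ℂ)))ᵀ = (JC n) * (N.map ((↑) : ℝ → ℂ)) := by
    rw [eM, eN, ← Matrix.transpose_map, h]
  have hC' := congrArg Matrix.transpose hC
  rw [Matrix.transpose_transpose] at hC'
  have hkey : (JC n)ᵀ * (M.map ((↑) : ℝ → ℂ)) = ((JC n)ᵀ * (N.map ((↑) : ℝ → ℂ)))ᵀ := by
    rw [JC_transpose, Matrix.neg_mul, Matrix.neg_mul, Matrix.transpose_neg, hC']
  rw [dotA, Matrix.mulVec_mulVec, hkey, ← dotA, ← Matrix.mulVec_mulVec, dotA,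
    Matrix.transpose_transpose, dotProduct_comm]

theorem stmt9 {n K : ℕ}
    (Hp Hm : Fin (K + 1) → Matrix (Fin n ⊕ Fin n) (Fin n ⊕ Fin n) ℝ)
    (τ : Fin (K + 1) → ℝ) (hτpos : ∀ k, 0 < τ k) (hτmono : StrictMono τ)
    (τK : ℝ) (hτK : τK = τ (Fin.last K))
    (hHk : ∀ k, (Jre n * Hm k)ᵀ = Jre n * Hp k)
    (φ ψ : ℝ → ((Fin n ⊕ Fin n) → ℂ))
    (hφ : ContinuousOn φ (Icc (-τK) τK))
    (hψ : ContinuousOn ψ (Icc (-τK) τK)) :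
    bil Hp Hm τ φ (fun θ => JC n *ᵥ ψ θ)
      = - bil Hp Hm τ ψ (fun θ => JC n *ᵥ φ θ) := by
  rw [bil, bil, neg_add, ← Finset.sum_neg_distrib]
  congr 1
  · exact keyJ (ψ 0) (φ 0)
  · apply Finset.sum_congr rfl
    intro k _
    rw [neg_sub]
    congr 1
    · apply intervalIntegral.integral_congr
      intro θ _
      exact key (Hm k) (Hp k) (hHk k) (ψ θ) (φ (θ - τ k))
    · apply intervalIntegral.integral_congr
      intro θ _
      have h' : (Jre n * Hp k)ᵀ = Jre n * Hm k := by
        have := congrArg Matrix.transpose (hHk k)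
        rw [Matrix.transpose_transpose] at this
        exact this.symm
      exact key (Hp k) (Hm k) h' (ψ (θ - τ k)) (φ θ)
end

section
/- Let φ₊(θ) = v₊e^{λθ} and φ₋(θ) = v₋e^{-λθ} where (λ, v₊) and (-λ, v₋) are right eigenpairs of M with v₋ = Jw₊ for a left eigenvector w₊ of λ. Then [φ₊, Jφ₋] = -w₊ᵀ M'(λ) v₊, where M'(λ) = I + Σₖ(H₋ₖe^{-λτₖ}τₖ - Hₖe^{λτₖ}τₖ) is the derivative of the characteristic matrix. In particular, if λ is a simple eigenvalue of M, then [φ₊, Jφ₋] ≠ 0. -/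
open Matrix Set intervalIntegral

/-- The characteristic matrix M(λ). -/
noncomputable def Mchar {n K : ℕ}
    (H0 : Matrix (Fin n ⊕ Fin n) (Fin n ⊕ Fin n) ℝ)
    (Hp Hm : Fin (K + 1) → Matrix (Fin n ⊕ Fin n) (Fin n ⊕ Fin n) ℝ)
    (τ : Fin (K + 1) → ℝ) (lam : ℂ) :
    Matrix (Fin n ⊕ Fin n) (Fin n ⊕ Fin n) ℂ :=
  lam • (1 : Matrix (Fin n ⊕ Fin n) (Fin n ⊕ Fin n) ℂ)
    - H0.map ((↑) : ℝ → ℂ)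
    - ∑ k, (Complex.exp (-lam * τ k) • (Hm k).map ((↑) : ℝ → ℂ)
          + Complex.exp (lam * τ k) • (Hp k).map ((↑) : ℝ → ℂ))

/-- The derivative M'(λ) = I + Σₖ (H₋ₖ e^{-λτₖ} τₖ - Hₖ e^{λτₖ} τₖ). -/
noncomputable def McharDeriv {n K : ℕ}
    (Hp Hm : Fin (K + 1) → Matrix (Fin n ⊕ Fin n) (Fin n ⊕ Fin n) ℝ)
    (τ : Fin (K + 1) → ℝ) (lam : ℂ) :
    Matrix (Fin n ⊕ Fin n) (Fin n ⊕ Fin n) ℂ :=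
  (1 : Matrix (Fin n ⊕ Fin n) (Fin n ⊕ Fin n) ℂ)
    + ∑ k, ((Complex.exp (-lam * τ k) * (τ k : ℂ)) • (Hm k).map ((↑) : ℝ → ℂ)
          - (Complex.exp (lam * τ k) * (τ k : ℂ)) • (Hp k).map ((↑) : ℝ → ℂ))

section helpers
open Finset

lemma sum_mulVec' {m k R : Type*} [Fintype m] [NonUnitalNonAssocSemiring R]
    {ι : Type*} (s : Finset ι) (A : ι → Matrix k m R) (v : m → R) :
    (∑ i ∈ s, A i) *ᵥ v = ∑ i ∈ s, (A i *ᵥ v) := by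
  ext j
  simp [Matrix.mulVec, dotProduct, Matrix.sum_apply, Finset.sum_mul]
  rw [Finset.sum_comm]

lemma dotProduct_sum' {m R : Type*} [Fintype m] [NonUnitalNonAssocSemiring R]
    {ι : Type*} (s : Finset ι) (w : m → R) (f : ι → (m → R)) :
    w ⬝ᵥ (∑ i ∈ s, f i) = ∑ i ∈ s, w ⬝ᵥ f i := by
  simp [dotProduct, Finset.sum_apply, Finset.mul_sum]
  rw [Finset.sum_comm]

lemma JC_mul_JC (n : ℕ) : JC n * JC n = -1 := by
  have h0 : JC n = (Jre n).map (Complex.ofRealHom : ℝ →+* ℂ) := rfl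
  have h1 : Jre n * Jre n = -1 := by
    simp [Jre, Matrix.fromBlocks_multiply, ← Matrix.fromBlocks_one, Matrix.fromBlocks_neg]
  rw [h0, ← Matrix.map_mul, h1]
  ext i j
  simp [Matrix.map_apply, Matrix.neg_apply, Matrix.one_apply, apply_ite]

end helpers
theorem stmt10 {n K : ℕ}
    (H0 : Matrix (Fin n ⊕ Fin n) (Fin n ⊕ Fin n) ℝ)
    (Hp Hm : Fin (K + 1) → Matrix (Fin n ⊕ Fin n) (Fin n ⊕ Fin n) ℝ)
    (τ : Fin (K + 1) → ℝ) (hτpos : ∀ k, 0 < τ k) (hτmono : StrictMono τ)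
    (hH0 : (Jre n * H0)ᵀ = Jre n * H0)
    (hHk : ∀ k, (Jre n * Hm k)ᵀ = Jre n * Hp k)
    (lam : ℂ) (vp vm wp : (Fin n ⊕ Fin n) → ℂ)
    (hvp : vp ≠ 0) (hvm : vm ≠ 0) (hwp : wp ≠ 0)
    (hrp : Mchar H0 Hp Hm τ lam *ᵥ vp = 0)
    (hrm : Mchar H0 Hp Hm τ (-lam) *ᵥ vm = 0)
    (hlw : wp ᵥ* Mchar H0 Hp Hm τ lam = 0)
    (hvw : vm = JC n *ᵥ wp) :
    bil Hp Hm τ (fun θ => Complex.exp (lam * θ) • vp)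
        (fun θ => JC n *ᵥ (Complex.exp (-lam * θ) • vm))
      = -(wp ⬝ᵥ (McharDeriv Hp Hm τ lam *ᵥ vp)) ∧
    (wp ⬝ᵥ (McharDeriv Hp Hm τ lam *ᵥ vp) ≠ 0 →
      bil Hp Hm τ (fun θ => Complex.exp (lam * θ) • vp)
        (fun θ => JC n *ᵥ (Complex.exp (-lam * θ) • vm)) ≠ 0) := by
  have hψ : ∀ θ : ℝ, (JC n *ᵥ (Complex.exp (-lam * θ) • vm))
      = Complex.exp (-lam * θ) • (-wp) := by
    intro θ
    rw [hvw, Matrix.mulVec_smul, Matrix.mulVec_mulVec, JC_mul_JC]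
    simp [Matrix.neg_mulVec]
  -- right-hand side expansion
  have hrhs : wp ⬝ᵥ (McharDeriv Hp Hm τ lam *ᵥ vp)
      = wp ⬝ᵥ vp + ∑ k : Fin (K+1),
          (Complex.exp (-lam * τ k) * (τ k : ℂ) * (wp ⬝ᵥ ((Hm k).map ((↑) : ℝ → ℂ) *ᵥ vp))
           - Complex.exp (lam * τ k) * (τ k : ℂ) * (wp ⬝ᵥ ((Hp k).map ((↑) : ℝ → ℂ) *ᵥ vp))) := by
    rw [McharDeriv, Matrix.add_mulVec, Matrix.one_mulVec, sum_mulVec',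
      dotProduct_add, dotProduct_sum']
    congr 1
    refine Finset.sum_congr rfl fun k _ => ?_
    rw [Matrix.sub_mulVec, dotProduct_sub, Matrix.smul_mulVec,
      Matrix.smul_mulVec, dotProduct_smul, dotProduct_smul]
    simp [smul_eq_mul]
  -- the integrals
  have hint1 : ∀ k : Fin (K+1),
      (∫ θ in (0:ℝ)..(τ k),
          (JC n *ᵥ (Complex.exp (-lam * θ) • vm)) ⬝ᵥ
            ((Hm k).map ((↑) : ℝ → ℂ) *ᵥ (Complex.exp (lam * ((θ - τ k : ℝ) : ℂ)) • vp)))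
        = -(Complex.exp (-lam * τ k) * (τ k : ℂ) * (wp ⬝ᵥ ((Hm k).map ((↑) : ℝ → ℂ) *ᵥ vp))) := by
    intro k
    have hconst : ∀ θ : ℝ,
        (JC n *ᵥ (Complex.exp (-lam * θ) • vm)) ⬝ᵥ
            ((Hm k).map ((↑) : ℝ → ℂ) *ᵥ (Complex.exp (lam * ((θ - τ k : ℝ) : ℂ)) • vp))
        = -(Complex.exp (-lam * τ k) * (wp ⬝ᵥ ((Hm k).map ((↑) : ℝ → ℂ) *ᵥ vp))) := by
      intro θ
      rw [hψ θ, Matrix.mulVec_smul, smul_dotProduct, dotProduct_smul,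
        neg_dotProduct]
      rw [smul_eq_mul, smul_eq_mul, ← mul_assoc, ← Complex.exp_add]
      have : -lam * θ + lam * ((θ - τ k : ℝ) : ℂ) = -lam * τ k := by
        push_cast; ring
      rw [this]; ring
    rw [intervalIntegral.integral_congr (g := fun _ =>
        -(Complex.exp (-lam * τ k) * (wp ⬝ᵥ ((Hm k).map ((↑) : ℝ → ℂ) *ᵥ vp))))
      (fun θ _ => hconst θ)]
    rw [intervalIntegral.integral_const]
    rw [sub_zero, Complex.real_smul]; ring
  have hint2 : ∀ k : Fin (K+1),
      (∫ θ in (0:ℝ)..(τ k),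
          (JC n *ᵥ (Complex.exp (-lam * ((θ - τ k : ℝ) : ℂ)) • vm)) ⬝ᵥ
            ((Hp k).map ((↑) : ℝ → ℂ) *ᵥ (Complex.exp (lam * θ) • vp)))
        = -(Complex.exp (lam * τ k) * (τ k : ℂ) * (wp ⬝ᵥ ((Hp k).map ((↑) : ℝ → ℂ) *ᵥ vp))) := by
    intro k
    have hconst : ∀ θ : ℝ,
        (JC n *ᵥ (Complex.exp (-lam * ((θ - τ k : ℝ) : ℂ)) • vm)) ⬝ᵥ
            ((Hp k).map ((↑) : ℝ → ℂ) *ᵥ (Complex.exp (lam * θ) • vp))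
        = -(Complex.exp (lam * τ k) * (wp ⬝ᵥ ((Hp k).map ((↑) : ℝ → ℂ) *ᵥ vp))) := by
      intro θ
      rw [hψ (θ - τ k), Matrix.mulVec_smul, smul_dotProduct, dotProduct_smul,
        neg_dotProduct]
      rw [smul_eq_mul, smul_eq_mul, ← mul_assoc, ← Complex.exp_add]
      have : -lam * ((θ - τ k : ℝ) : ℂ) + lam * θ = lam * τ k := by
        push_cast; ring
      rw [this]; ring
    rw [intervalIntegral.integral_congr (g := fun _ =>
        -(Complex.exp (lam * τ k) * (wp ⬝ᵥ ((Hp k).map ((↑) : ℝ → ℂ) *ᵥ vp))))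
      (fun θ _ => hconst θ)]
    rw [intervalIntegral.integral_const]
    rw [sub_zero, Complex.real_smul]; ring
  have hmain : bil Hp Hm τ (fun θ => Complex.exp (lam * θ) • vp)
        (fun θ => JC n *ᵥ (Complex.exp (-lam * θ) • vm))
      = -(wp ⬝ᵥ (McharDeriv Hp Hm τ lam *ᵥ vp)) := by
    rw [bil]
    simp only [hint1, hint2]
    have h0' : (JC n *ᵥ (Complex.exp (-lam * ((0:ℝ):ℂ)) • vm)) ⬝ᵥ
        (Complex.exp (lam * ((0:ℝ):ℂ)) • vp) = -(wp ⬝ᵥ vp) := by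
      rw [hψ 0]
      simp [smul_dotProduct, dotProduct_smul, neg_dotProduct]
    rw [h0', hrhs, neg_add, ← Finset.sum_neg_distrib]
    congr 1
    refine Finset.sum_congr rfl fun k _ => ?_
    ring
  exact ⟨hmain, fun h => hmain ▸ neg_ne_zero.mpr h⟩
end
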